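/- For every n ≥ 1, for μ_n-almost every symmetric matrix Q, the function x ↦ xᵀQx attains its minimum over the standard simplex Δ^{n-1} at exactly one point; that is, the set of global minimizers of the quadratic form over Δ^{n-1} is a singleton μ_n-almost surely. -/

import Mathlib

open MeasureTheory ProbabilityTheory Filter Matrix

/-- Build a symmetric matrix from diagonal coordinates and strictly
upper-triangular coordinates. -/
noncomputable def goeMatrix (n : ℕ)
    (d : Fin n → ℝ) (o : {p : Fin n × Fin n // p.1 < p.2} → ℝ) :
    Matrix (Fin n) (Fin n) ℝ :=
  fun i j =>
    if h : i = j then d i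
    else if h' : i < j then o ⟨(i, j), h'⟩
    else o ⟨(j, i), lt_of_le_of_ne (not_lt.mp h') (Ne.symm h)⟩

instance matrixMeasurableSpace (n : ℕ) :
    MeasurableSpace (Matrix (Fin n) (Fin n) ℝ) := by
  unfold Matrix; infer_instance

/-- The GOE model: the pushforward, under the symmetric-matrix assembly map, of
the product Gaussian measure with `N(0,1)` diagonal coordinates and `N(0,1/2)`
strictly upper-triangular coordinates. -/
noncomputable def goeMeasure (n : ℕ) : Measure (Matrix (Fin n) (Fin n) ℝ) :=
  ((Measure.pi fun _ : Fin n => gaussianReal 0 1).prod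
      (Measure.pi fun _ : {p : Fin n × Fin n // p.1 < p.2} =>
        gaussianReal 0 (1 / 2))).map
    (fun dq => goeMatrix n dq.1 dq.2)


namespace GOE

variable (n : ℕ)

abbrev E := (Fin n → ℝ) × ({p : Fin n × Fin n // p.1 < p.2} → ℝ)

noncomputable abbrev f (p : E n) : Matrix (Fin n) (Fin n) ℝ := goeMatrix n p.1 p.2

abbrev q (M : Matrix (Fin n) (Fin n) ℝ) (x : Fin n → ℝ) : ℝ := x ⬝ᵥ M.mulVec x

noncomputable def G (p : E n) : ℝ := sInf (q n (f n p) '' stdSimplex ℝ (Fin n))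

lemma f_add (p v : E n) : f n (p + v) = f n p + f n v := by
  funext i j
  simp only [f, goeMatrix, Matrix.add_apply]
  split_ifs <;> simp

lemma f_smul (c : ℝ) (p : E n) : f n (c • p) = c • f n p := by
  funext i j
  simp only [f, goeMatrix, Matrix.smul_apply]
  split_ifs <;> simp

lemma q_add (A B : Matrix (Fin n) (Fin n) ℝ) (x : Fin n → ℝ) :
    q n (A + B) x = q n A x + q n B x := by
  simp [q, Matrix.add_mulVec, dotProduct_add]

lemma q_smul (c : ℝ) (A : Matrix (Fin n) (Fin n) ℝ) (x : Fin n → ℝ) :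
    q n (c • A) x = c * q n A x := by
  simp [q, Matrix.smul_mulVec, dotProduct_smul, smul_eq_mul]

lemma q_cont (M : Matrix (Fin n) (Fin n) ℝ) : Continuous (q n M) :=
  continuous_id.dotProduct (continuous_const.matrix_mulVec continuous_id)

lemma q_eq (M : Matrix (Fin n) (Fin n) ℝ) (x : Fin n → ℝ) :
    q n M x = ∑ i, x i * ∑ j, M i j * x j := by
  simp [q, dotProduct, Matrix.mulVec]

end GOE
namespace GOE

variable (n : ℕ)

lemma q_bound {M : Matrix (Fin n) (Fin n) ℝ} {c : ℝ} (hM : ∀ i j, |M i j| ≤ c)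
    {x : Fin n → ℝ} (hx : x ∈ stdSimplex ℝ (Fin n)) : |q n M x| ≤ c := by
  obtain ⟨hx0, hx1⟩ := hx
  rw [q_eq]
  have hinner : ∀ i, |∑ j, M i j * x j| ≤ c := by
    intro i
    calc |∑ j, M i j * x j| ≤ ∑ j, |M i j * x j| := Finset.abs_sum_le_sum_abs _ _
      _ ≤ ∑ j, c * x j := by
          refine Finset.sum_le_sum fun j _ => ?_
          rw [abs_mul, abs_of_nonneg (hx0 j)]
          exact mul_le_mul_of_nonneg_right (hM i j) (hx0 j)
      _ = c := by rw [← Finset.mul_sum, hx1, mul_one]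
  calc |∑ i, x i * ∑ j, M i j * x j| ≤ ∑ i, |x i * ∑ j, M i j * x j| :=
        Finset.abs_sum_le_sum_abs _ _
    _ ≤ ∑ i, x i * c := by
        refine Finset.sum_le_sum fun i _ => ?_
        rw [abs_mul, abs_of_nonneg (hx0 i)]
        exact mul_le_mul_of_nonneg_left (hinner i) (hx0 i)
    _ = c := by rw [← Finset.sum_mul, hx1, one_mul]

lemma simplex_nonempty (hn : 1 ≤ n) : (stdSimplex ℝ (Fin n)).Nonempty :=
  ⟨Pi.single ⟨0, hn⟩ 1, single_mem_stdSimplex ℝ _⟩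

lemma exists_min (hn : 1 ≤ n) (M : Matrix (Fin n) (Fin n) ℝ) :
    ∃ x ∈ stdSimplex ℝ (Fin n), ∀ y ∈ stdSimplex ℝ (Fin n), q n M x ≤ q n M y := by
  obtain ⟨x, hx, hmin⟩ := (isCompact_stdSimplex ℝ (Fin n)).exists_isMinOn
    (simplex_nonempty n hn) (q_cont n M).continuousOn
  exact ⟨x, hx, fun y hy => hmin hy⟩

lemma bddBelow_image (p : E n) : BddBelow (q n (f n p) '' stdSimplex ℝ (Fin n)) :=
  ((isCompact_stdSimplex ℝ (Fin n)).image (q_cont n _)).bddBelow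

lemma G_eq (p : E n) {x : Fin n → ℝ} (hx : x ∈ stdSimplex ℝ (Fin n))
    (hmin : ∀ y ∈ stdSimplex ℝ (Fin n), q n (f n p) x ≤ q n (f n p) y) :
    G n p = q n (f n p) x :=
  IsLeast.csInf_eq ⟨⟨x, hx, rfl⟩, by rintro _ ⟨y, hy, rfl⟩; exact hmin y hy⟩

lemma f_entry_bound (v : E n) (i j : Fin n) : |f n v i j| ≤ ‖v‖ := by
  simp only [f, goeMatrix]
  split_ifs
  · simpa [Real.norm_eq_abs] using (norm_le_pi_norm v.1 i).trans (norm_fst_le v)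
  · simpa [Real.norm_eq_abs] using (norm_le_pi_norm v.2 _).trans (norm_snd_le v)
  · simpa [Real.norm_eq_abs] using (norm_le_pi_norm v.2 _).trans (norm_snd_le v)

lemma lipschitz (hn : 1 ≤ n) : LipschitzWith 1 (G n) := by
  apply LipschitzWith.of_dist_le_mul
  have key : ∀ a b : E n, G n a ≤ G n b + dist a b := by
    intro a b
    obtain ⟨x, hx, hmin⟩ := exists_min n hn (f n b)
    have hGb : G n b = q n (f n b) x := G_eq n b hx hmin
    have h1 : G n a ≤ q n (f n a) x := csInf_le (bddBelow_image n a) ⟨x, hx, rfl⟩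
    have hfe : f n a = f n b + f n (a - b) := by
      have h : b + (a - b) = a := by abel
      rw [← f_add, h]
    have h2 : q n (f n a) x = q n (f n b) x + q n (f n (a - b)) x := by
      rw [hfe, q_add]
    have h3 : |q n (f n (a - b)) x| ≤ ‖a - b‖ :=
      q_bound n (fun i j => f_entry_bound n (a - b) i j) hx
    have h4 : q n (f n (a - b)) x ≤ dist a b := by
      rw [dist_eq_norm]; exact (le_abs_self _).trans h3
    linarith [h1, h2, h4, hGb.ge]
  intro p p'
  rw [Real.dist_eq, NNReal.coe_one, one_mul]
  rw [abs_sub_le_iff]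
  constructor
  · have := key p p'; linarith [this, dist_comm p p' ▸ this]
  · have := key p' p; rw [dist_comm] at this; linarith

end GOE
namespace GOE

variable (n : ℕ)

lemma f_single_diag (i : Fin n) :
    f n ((Pi.single i 1, 0) : E n) = fun k l => if k = i ∧ l = i then (1:ℝ) else 0 := by
  funext k l
  by_cases h : k = l
  · subst h
    simp [f, goeMatrix, Pi.single_apply]
  · have hne : ¬(k = i ∧ l = i) := by rintro ⟨rfl, rfl⟩; exact h rfl
    simp only [f, goeMatrix, dif_neg h, hne, if_false]
    split_ifs <;> rfl

lemma q_single_diag (i : Fin n) (z : Fin n → ℝ) :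
    q n (f n ((Pi.single i 1, 0) : E n)) z = z i * z i := by
  rw [q_eq, f_single_diag]
  have h1 : ∀ k, (∑ l, (if k = i ∧ l = i then (1:ℝ) else 0) * z l)
      = if k = i then z i else 0 := by
    intro k
    rw [Finset.sum_eq_single i]
    · by_cases h : k = i <;> simp [h]
    · intro b _ hb
      have : ¬(k = i ∧ b = i) := fun hc => hb hc.2
      simp [this]
    · simp
  simp only [h1]
  rw [Finset.sum_eq_single i]
  · simp
  · intro b _ hb; simp [hb]
  · simp

lemma unique_of_diff (hn : 1 ≤ n) (p : E n) (hd : DifferentiableAt ℝ (G n) p) :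
    ∃! x : Fin n → ℝ, x ∈ stdSimplex ℝ (Fin n) ∧
      ∀ y ∈ stdSimplex ℝ (Fin n), x ⬝ᵥ (f n p).mulVec x ≤ y ⬝ᵥ (f n p).mulVec y := by
  obtain ⟨x₀, hx₀, hmin₀⟩ := exists_min n hn (f n p)
  have claim : ∀ z : Fin n → ℝ, z ∈ stdSimplex ℝ (Fin n) →
      (∀ y ∈ stdSimplex ℝ (Fin n), q n (f n p) z ≤ q n (f n p) y) →
      ∀ i : Fin n, z i * z i = fderiv ℝ (G n) p ((Pi.single i 1, 0) : E n) := by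
    intro z hz hminz i
    set v : E n := ((Pi.single i 1, 0) : E n) with hv
    have hub : ∀ t : ℝ, G n (p + t • v) ≤ G n p + t * (z i * z i) := by
      intro t
      have h1 : G n (p + t • v) ≤ q n (f n (p + t • v)) z :=
        csInf_le (bddBelow_image n _) ⟨z, hz, rfl⟩
      have h2 : q n (f n (p + t • v)) z = q n (f n p) z + t * (z i * z i) := by
        rw [f_add, q_add, f_smul, q_smul, q_single_diag]
      have h3 : G n p = q n (f n p) z := G_eq n p hz hminz
      linarith
    have hline : HasDerivAt (fun t : ℝ => p + t • v) v 0 := by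
      simpa using ((hasDerivAt_id (0:ℝ)).smul_const v).const_add p
    have hcomp : HasDerivAt (fun t : ℝ => G n (p + t • v)) (fderiv ℝ (G n) p v) 0 := by
      have h0 : p + (0:ℝ) • v = p := by simp
      have hF : HasFDerivAt (G n) (fderiv ℝ (G n) p) (p + (0:ℝ) • v) := by
        rw [h0]; exact hd.hasFDerivAt
      exact hF.comp_hasDerivAt 0 hline
    have hφ : HasDerivAt (fun t : ℝ => G n (p + t • v) - t * (z i * z i))
        (fderiv ℝ (G n) p v - z i * z i) 0 :=
      hcomp.sub (hasDerivAt_mul_const (z i * z i))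
    have hmax : IsLocalMax (fun t : ℝ => G n (p + t • v) - t * (z i * z i)) 0 := by
      refine Filter.Eventually.of_forall fun t => ?_
      have := hub t
      simp only [zero_smul, add_zero, zero_mul, sub_zero]
      linarith
    have hzero := hmax.hasDerivAt_eq_zero hφ
    linarith [hzero]
  refine ⟨x₀, ⟨hx₀, hmin₀⟩, ?_⟩
  rintro y ⟨hy, hminy⟩
  have h1 := claim y hy hminy
  have h2 := claim x₀ hx₀ hmin₀
  funext i
  have heq : y i * y i = x₀ i * x₀ i := (h1 i).trans (h2 i).symm
  have hfac : (y i - x₀ i) * (y i + x₀ i) = 0 := by ring_nf; linarith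
  rcases mul_eq_zero.mp hfac with h | h
  · linarith
  · have := hy.1 i
    have := hx₀.1 i
    linarith

end GOE
namespace GOE

variable (n : ℕ)

lemma f_measurable : Measurable (fun dq : E n => goeMatrix n dq.1 dq.2) := by
  apply measurable_pi_lambda
  intro i
  apply measurable_pi_lambda
  intro j
  show Measurable fun dq : E n => goeMatrix n dq.1 dq.2 i j
  simp only [goeMatrix]
  split_ifs with h h'
  · exact (measurable_pi_apply i).comp measurable_fst
  · exact (measurable_pi_apply _).comp measurable_snd
  · exact (measurable_pi_apply _).comp measurable_snd

noncomputable def r (Q : Matrix (Fin n) (Fin n) ℝ) : E n :=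
  (fun i => Q i i, fun pr => Q pr.1.1 pr.1.2)

lemma r_measurable : Measurable (r n) := by
  apply Measurable.prodMk
  · exact measurable_pi_lambda _ fun i =>
      (measurable_pi_apply i).comp (measurable_pi_apply i)
  · exact measurable_pi_lambda _ fun pr =>
      (measurable_pi_apply pr.1.2).comp (measurable_pi_apply pr.1.1)

lemma r_f (p : E n) : r n (f n p) = p := by
  refine Prod.ext ?_ ?_
  · funext i
    simp [r, f, goeMatrix]
  · funext pr
    have h : pr.1.1 < pr.1.2 := pr.2
    show f n p pr.1.1 pr.1.2 = p.2 pr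
    simp only [f, goeMatrix, dif_neg h.ne, dif_pos h]

lemma f_symm (p : E n) (i j : Fin n) : f n p i j = f n p j i := by
  simp only [f, goeMatrix]
  rcases lt_trichotomy i j with h | h | h
  · rw [dif_neg h.ne, dif_pos h, dif_neg h.ne', dif_neg (asymm h)]
  · rw [h]
  · rw [dif_neg h.ne', dif_neg (asymm h), dif_neg h.ne, dif_pos h]

lemma f_r (Q : Matrix (Fin n) (Fin n) ℝ) (hQ : ∀ i j, Q i j = Q j i) :
    f n (r n Q) = Q := by
  funext i j
  simp only [f, r, goeMatrix]
  split_ifs with h h'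
  · rw [h]
  · rfl
  · exact hQ j i

end GOE

lemma pi_fin_ac (k : ℕ) (μ ν : Measure ℝ) [SigmaFinite μ] [SigmaFinite ν]
    (h : μ ≪ ν) :
    Measure.pi (fun _ : Fin k => μ) ≪ Measure.pi (fun _ : Fin k => ν) := by
  induction k with
  | zero =>
    refine Measure.AbsolutelyContinuous.mk fun s hs h0 => ?_
    rcases s.eq_empty_or_nonempty with rfl | ⟨a, ha⟩
    · simp
    · exfalso
      have hsu : s = Set.univ := Set.eq_univ_of_forall fun x => (Subsingleton.elim a x) ▸ ha
      rw [hsu, Measure.pi_univ] at h0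
      simp at h0
  | succ k ih =>
    have hT1 := measurePreserving_piFinSuccAbove (fun _ : Fin (k+1) => μ) 0
    have hT2 := measurePreserving_piFinSuccAbove (fun _ : Fin (k+1) => ν) 0
    have hprod : (μ.prod (Measure.pi fun _ : Fin k => μ))
        ≪ (ν.prod (Measure.pi fun _ : Fin k => ν)) :=
      Measure.AbsolutelyContinuous.prod h ih
    have hmap := (MeasurableEquiv.measurableEmbedding
      (MeasurableEquiv.piFinSuccAbove (fun _ : Fin (k+1) => ℝ) 0).symm).absolutelyContinuous_map
      hprod
    rwa [(hT1.symm _).map_eq, (hT2.symm _).map_eq] at hmap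

lemma pi_const_ac {ι : Type} [Fintype ι] (μ ν : Measure ℝ)
    [SigmaFinite μ] [SigmaFinite ν] (h : μ ≪ ν) :
    Measure.pi (fun _ : ι => μ) ≪ Measure.pi (fun _ : ι => ν) := by
  let e := (Fintype.equivFin ι).symm
  have h1 := measurePreserving_piCongrLeft (fun _ : ι => μ) e
  have h2 := measurePreserving_piCongrLeft (fun _ : ι => ν) e
  have h3 := pi_fin_ac (Fintype.card ι) μ ν h
  have hmap := (MeasurableEquiv.measurableEmbedding
    (MeasurableEquiv.piCongrLeft (fun _ : ι => ℝ) e)).absolutelyContinuous_map h3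
  rwa [h1.map_eq, h2.map_eq] at hmap
/-- For every `n ≥ 1`, for `μ_n`-almost every `Q`, the quadratic form

`x ↦ xᵀQx` has exactly one global minimizer over the standard simplex. -/
theorem goe_unique_minimizer (n : ℕ) (hn : 1 ≤ n) :
    ∀ᵐ Q ∂(goeMeasure n),
      ∃! x : Fin n → ℝ, x ∈ stdSimplex ℝ (Fin n) ∧
        ∀ y ∈ stdSimplex ℝ (Fin n), x ⬝ᵥ Q.mulVec x ≤ y ⬝ᵥ Q.mulVec y := by
  classical
  set μE := ((Measure.pi fun _ : Fin n => gaussianReal 0 1).prod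
      (Measure.pi fun _ : {p : Fin n × Fin n // p.1 < p.2} =>
        gaussianReal 0 (1 / 2))) with hμE
  haveI : (volume : Measure (GOE.E n)).IsAddHaarMeasure :=
    Measure.prod.instIsAddHaarMeasure _ _
  have hvol : ∀ᵐ p ∂(volume : Measure (GOE.E n)), DifferentiableAt ℝ (GOE.G n) p :=
    (GOE.lipschitz n hn).ae_differentiableAt
  have hac : μE ≪ (volume : Measure (GOE.E n)) := by
    have g1 : gaussianReal 0 1 ≪ (volume : Measure ℝ) :=
      gaussianReal_absolutelyContinuous 0 one_ne_zero
    have g2 : gaussianReal 0 (1/2) ≪ (volume : Measure ℝ) :=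
      gaussianReal_absolutelyContinuous 0 (by norm_num)
    have hpp := Measure.AbsolutelyContinuous.prod
      (pi_const_ac (ι := Fin n) _ _ g1)
      (pi_const_ac (ι := {p : Fin n × Fin n // p.1 < p.2}) _ _ g2)
    have hveq : (volume : Measure (GOE.E n))
        = (Measure.pi fun _ : Fin n => (volume : Measure ℝ)).prod
          (Measure.pi fun _ : {p : Fin n × Fin n // p.1 < p.2} => (volume : Measure ℝ)) := by
      rw [← volume_pi, ← volume_pi, ← Measure.volume_eq_prod]
    rw [hveq]
    exact hpp
  have hae : ∀ᵐ p ∂μE, DifferentiableAt ℝ (GOE.G n) p :=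
    hvol.filter_mono hac.ae_le
  have hN : μE {p : GOE.E n | ¬ DifferentiableAt ℝ (GOE.G n) p} = 0 := ae_iff.mp hae
  rw [goeMeasure, ae_iff]
  set Bad : Set (Matrix (Fin n) (Fin n) ℝ) :=
    {Q | ¬ ∃! x : Fin n → ℝ, x ∈ stdSimplex ℝ (Fin n) ∧
      ∀ y ∈ stdSimplex ℝ (Fin n), x ⬝ᵥ Q.mulVec x ≤ y ⬝ᵥ Q.mulVec y} with hBad
  set S : Set (Matrix (Fin n) (Fin n) ℝ) :=
    {Q | ∀ i j, Q i j = Q j i}ᶜ ∪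
      (GOE.r n ⁻¹' {p : GOE.E n | DifferentiableAt ℝ (GOE.G n) p}ᶜ) with hS
  have hSmeas : MeasurableSet S := by
    apply MeasurableSet.union
    · apply MeasurableSet.compl
      have heq : {Q : Matrix (Fin n) (Fin n) ℝ | ∀ i j, Q i j = Q j i}
          = ⋂ i, ⋂ j, {Q : Matrix (Fin n) (Fin n) ℝ | Q i j = Q j i} := by
        ext Q; simp [Set.mem_iInter]
      rw [heq]
      refine MeasurableSet.iInter fun i => MeasurableSet.iInter fun j => ?_
      exact measurableSet_eq_fun
        ((measurable_pi_apply j).comp (measurable_pi_apply i))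
        ((measurable_pi_apply i).comp (measurable_pi_apply j))
    · exact (GOE.r_measurable n) (measurableSet_of_differentiableAt ℝ (GOE.G n)).compl
  have hsub : Bad ⊆ S := by
    intro Q hQ
    by_contra hQS
    simp only [hS, Set.mem_union, Set.mem_compl_iff, Set.mem_preimage, Set.mem_setOf_eq,
      not_or, not_not] at hQS
    obtain ⟨hsym, hdiff⟩ := hQS
    apply hQ
    have hfr : GOE.f n (GOE.r n Q) = Q := GOE.f_r n Q hsym
    have huniq := GOE.unique_of_diff n hn (GOE.r n Q) hdiff
    rwa [hfr] at huniq
  have hmain : (μE.map fun dq : GOE.E n => goeMatrix n dq.1 dq.2) Bad = 0 := by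
    refine le_antisymm ?_ zero_le
    have h1 : (μE.map fun dq : GOE.E n => goeMatrix n dq.1 dq.2) Bad
        ≤ (μE.map fun dq : GOE.E n => goeMatrix n dq.1 dq.2) S := measure_mono hsub
    rw [Measure.map_apply (GOE.f_measurable n) hSmeas] at h1
    refine h1.trans ?_
    rw [← hN]
    apply measure_mono
    intro p hp
    rcases hp with hp | hp
    · exact absurd (fun i j => GOE.f_symm n p i j) hp
    · simpa [GOE.r_f n p] using hp
  exact hmain
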